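/- For a linear operator 𝒜 : ℝ^{p} → ℝ^{q} (e.g., a cross-correlation/convolution) and tensors P, Q of matching dimensions, ⟨P, 𝒜(Q)⟩ = ⟨Q, 𝒜ᵀ(P)⟩, where 𝒜ᵀ is the adjoint. Consequently, in the two-layer convolutional UNN, the block update for H₁ with X, H₂ fixed and tanh-regularizer Ψ_tanh is H₁* = tanh(𝒞₁(X) + 𝒞₂ᵀ(H₂) + b₁ ⊗ 1), the sum of a convolution of the input and a deconvolution of the next layer. -/
import Mathlib


open BigOperators Real

/-- The dot product on ℝ^ι. -/
def dotp {ι : Type*} [Fintype ι] (x y : ι → ℝ) : ℝ := ∑ i, x i * y i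

lemma klD {x u : ℝ} (hx : 0 ≤ x) (hu : 0 < u) :
    x - u ≤ x * Real.log x - x * Real.log u ∧
    (x ≠ u → x - u < x * Real.log x - x * Real.log u) := by
  rcases eq_or_lt_of_le hx with h0 | hx
  · constructor
    · simp [← h0]; linarith
    · intro _; simp [← h0]; linarith
  · have hlog : Real.log (u / x) ≤ u / x - 1 := Real.log_le_sub_one_of_pos (by positivity)
    have hdiv : Real.log (u / x) = Real.log u - Real.log x := Real.log_div hu.ne' hx.ne'
    have hne : x * (u / x) = u := by field_simp
    constructor
    · nlinarith [mul_le_mul_of_nonneg_left hlog hx.le]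
    · intro hne'
      have h1 : u / x ≠ 1 := fun h => hne' (by field_simp at h; linarith)
      have hlt : Real.log (u / x) < u / x - 1 := Real.log_lt_sub_one_of_pos (by positivity) h1
      nlinarith [mul_lt_mul_of_pos_left hlt hx]

lemma key_tanh (a h : ℝ) (h1 : -1 ≤ h) (h2 : h ≤ 1) :
    ((1 + Real.tanh a) / 2) * Real.log ((1 + Real.tanh a) / 2)
      + ((1 - Real.tanh a) / 2) * Real.log ((1 - Real.tanh a) / 2) - a * Real.tanh a
      ≤ ((1 + h) / 2) * Real.log ((1 + h) / 2)
      + ((1 - h) / 2) * Real.log ((1 - h) / 2) - a * h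
    ∧ (h ≠ Real.tanh a →
      ((1 + Real.tanh a) / 2) * Real.log ((1 + Real.tanh a) / 2)
      + ((1 - Real.tanh a) / 2) * Real.log ((1 - Real.tanh a) / 2) - a * Real.tanh a
      < ((1 + h) / 2) * Real.log ((1 + h) / 2)
      + ((1 - h) / 2) * Real.log ((1 - h) / 2) - a * h) := by
  have hc := Real.cosh_pos a
  set t := Real.tanh a with ht
  have hu1 : (1 + t) / 2 = Real.exp a / (2 * Real.cosh a) := by
    rw [ht, Real.tanh_eq_sinh_div_cosh, Real.sinh_eq, Real.cosh_eq] at *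
    field_simp; ring
  have hv1 : (1 - t) / 2 = Real.exp (-a) / (2 * Real.cosh a) := by
    rw [ht, Real.tanh_eq_sinh_div_cosh, Real.sinh_eq, Real.cosh_eq] at *
    field_simp; ring
  set u := (1 + t) / 2 with hud
  set v := (1 - t) / 2 with hvd
  have hu : 0 < u := by rw [hu1]; positivity
  have hv : 0 < v := by rw [hv1]; positivity
  have hlogu : Real.log u = a - Real.log (2 * Real.cosh a) := by
    rw [hu1, Real.log_div (Real.exp_ne_zero a) (by positivity), Real.log_exp]
  have hlogv : Real.log v = -a - Real.log (2 * Real.cosh a) := by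
    rw [hv1, Real.log_div (Real.exp_ne_zero (-a)) (by positivity), Real.log_exp]
  have ha : a = (Real.log u - Real.log v) / 2 := by rw [hlogu, hlogv]; ring
  set p := (1 + h) / 2 with hpd
  set q := (1 - h) / 2 with hqd
  have hp : 0 ≤ p := by rw [hpd]; linarith
  have hq : 0 ≤ q := by rw [hqd]; linarith
  have hiden : (p * Real.log p + q * Real.log q - a * h)
      - (u * Real.log u + v * Real.log v - a * t)
      = (p * Real.log p - p * Real.log u) + (q * Real.log q - q * Real.log v) := by
    have hh : h = p - q := by rw [hpd, hqd]; ring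
    have htt : t = u - v := by rw [hud, hvd]; ring
    have hq1 : q = 1 - p := by rw [hpd, hqd]; ring
    have hv2 : v = 1 - u := by rw [hud, hvd]; ring
    rw [hh, htt, ha, hq1, hv2]
    ring
  have Du := klD hp hu
  have Dq := klD hq hv
  have hsum : (p - u) + (q - v) = 0 := by rw [hpd, hqd, hud, hvd]; ring
  constructor
  · nlinarith [Du.1, Dq.1]
  · intro hne
    have hpu : p ≠ u := by
      intro hpe; apply hne; rw [hpd, hud] at hpe; linarith
    have := Du.2 hpu
    nlinarith [Dq.1]

lemma tanh_mem_Icc (a : ℝ) : Real.tanh a ∈ Set.Icc (-1 : ℝ) 1 := by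
  have hc := Real.cosh_pos a
  have he1 := Real.exp_pos a
  have he2 := Real.exp_pos (-a)
  rw [Real.tanh_eq_sinh_div_cosh, Real.sinh_eq, Real.cosh_eq]
  constructor
  · rw [le_div_iff₀ (by rw [Real.cosh_eq] at hc; linarith)]; linarith
  · rw [div_le_iff₀ (by rw [Real.cosh_eq] at hc; linarith)]; linarith

/-- (a) Every linear operator 𝒜 between finite-dimensional real coordinate spaces
has an adjoint 𝒜ᵀ with ⟨P, 𝒜Q⟩ = ⟨Q, 𝒜ᵀP⟩.
(b) Consequently, in the two-layer convolutional UNN with cross-correlation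
operators 𝒞₁, 𝒞₂ (with adjoint 𝒞₂ᵀ), biases b₁ broadcast over spatial positions,
and tanh regularizer Ψ_tanh (with domain [−1,1]), the blockwise minimizer for H₁
with X, H₂ fixed is H₁* = tanh(𝒞₁(X) + 𝒞₂ᵀ(H₂) + b₁ ⊗ 1). -/
theorem stmt15 (p c₁ s₁ c₂ s₂ : ℕ)
    (C₁ : (Fin p → ℝ) →ₗ[ℝ] (Fin c₁ × Fin s₁ → ℝ))
    (C₂ : (Fin c₁ × Fin s₁ → ℝ) →ₗ[ℝ] (Fin c₂ × Fin s₂ → ℝ))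
    (C₂t : (Fin c₂ × Fin s₂ → ℝ) →ₗ[ℝ] (Fin c₁ × Fin s₁ → ℝ))
    (hadj : ∀ u v, dotp u (C₂ v) = dotp v (C₂t u))
    (X : Fin p → ℝ) (H₂ : Fin c₂ × Fin s₂ → ℝ) (b₁ : Fin c₁ → ℝ) :
    -- (a) general adjoint identity
    (∀ (q r : ℕ) (A : (Fin q → ℝ) →ₗ[ℝ] (Fin r → ℝ)),
      ∃ At : (Fin r → ℝ) →ₗ[ℝ] (Fin q → ℝ), ∀ P Q, dotp P (A Q) = dotp Q (At P)) ∧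
    -- (b) the convolutional block update
    (let φ : ℝ → ℝ := fun s => s * Real.log s
     let Ψtanh : (Fin c₁ × Fin s₁ → ℝ) → ℝ :=
       fun H => ∑ j, (φ ((1 + H j) / 2) + φ ((1 - H j) / 2))
     let bb : Fin c₁ × Fin s₁ → ℝ := fun j => b₁ j.1
     let E : (Fin c₁ × Fin s₁ → ℝ) → ℝ := fun H₁ =>
       -dotp H₁ (C₁ X) - dotp H₂ (C₂ H₁) - dotp bb H₁ + Ψtanh H₁
     let Hstar : Fin c₁ × Fin s₁ → ℝ :=
       fun j => Real.tanh ((C₁ X) j + (C₂t H₂) j + bb j)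
     (∀ j, Hstar j ∈ Set.Icc (-1:ℝ) 1) ∧
     (∀ H₁, (∀ j, H₁ j ∈ Set.Icc (-1:ℝ) 1) → E Hstar ≤ E H₁) ∧
     (∀ H₁, (∀ j, H₁ j ∈ Set.Icc (-1:ℝ) 1) → E H₁ = E Hstar → H₁ = Hstar)) := by
  constructor
  · -- part (a)
    intro q r A
    refine ⟨Matrix.toLin' (LinearMap.toMatrix' A).transpose, fun P Q => ?_⟩
    have hA : A Q = (LinearMap.toMatrix' A).mulVec Q := by
      conv_lhs => rw [← Matrix.toLin'_toMatrix' A]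
      rw [Matrix.toLin'_apply]
    rw [hA, Matrix.toLin'_apply]
    simp only [dotp, Matrix.mulVec, dotProduct, Matrix.transpose_apply, Finset.mul_sum]
    rw [Finset.sum_comm]
    exact Finset.sum_congr rfl fun i _ => Finset.sum_congr rfl fun j _ => by ring
  · -- part (b)
    dsimp only
    set a : Fin c₁ × Fin s₁ → ℝ := fun j => (C₁ X) j + (C₂t H₂) j + b₁ j.1 with hadef
    have hE : ∀ H : Fin c₁ × Fin s₁ → ℝ,
        -dotp H (C₁ X) - dotp H₂ (C₂ H) - dotp (fun j => b₁ j.1) H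
          + ∑ j, (((1 + H j) / 2) * Real.log ((1 + H j) / 2)
              + ((1 - H j) / 2) * Real.log ((1 - H j) / 2))
        = ∑ j, (((1 + H j) / 2) * Real.log ((1 + H j) / 2)
              + ((1 - H j) / 2) * Real.log ((1 - H j) / 2) - a j * H j) := by
      intro H
      rw [hadj H₂ H]
      simp only [dotp, hadef]
      rw [Finset.sum_sub_distrib]
      have : ∑ j, ((C₁ X) j + (C₂t H₂) j + b₁ j.1) * H j
          = ∑ j, H j * (C₁ X) j + (∑ j, H j * (C₂t H₂) j + ∑ j, (fun j : Fin c₁ × Fin s₁ => b₁ j.1) j * H j) := by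
        rw [← Finset.sum_add_distrib, ← Finset.sum_add_distrib]
        exact Finset.sum_congr rfl fun j _ => by ring
      rw [this]
      ring
    refine ⟨fun j => tanh_mem_Icc _, ?_, ?_⟩
    · intro H₁ hH
      rw [hE, hE]
      apply Finset.sum_le_sum
      intro j _
      exact (key_tanh (a j) (H₁ j) (hH j).1 (hH j).2).1
    · intro H₁ hH heq
      by_contra hne
      have ⟨j0, hj0⟩ : ∃ j, H₁ j ≠ Real.tanh (a j) := by
        by_contra hall
        push_neg at hall
        exact hne (funext hall)
      have hlt : (∑ j, (((1 + Real.tanh (a j)) / 2) * Real.log ((1 + Real.tanh (a j)) / 2)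
              + ((1 - Real.tanh (a j)) / 2) * Real.log ((1 - Real.tanh (a j)) / 2)
              - a j * Real.tanh (a j)))
          < ∑ j, (((1 + H₁ j) / 2) * Real.log ((1 + H₁ j) / 2)
              + ((1 - H₁ j) / 2) * Real.log ((1 - H₁ j) / 2) - a j * H₁ j) := by
        apply Finset.sum_lt_sum
        · intro j _; exact (key_tanh (a j) (H₁ j) (hH j).1 (hH j).2).1
        · exact ⟨j0, Finset.mem_univ _, (key_tanh (a j0) (H₁ j0) (hH j0).1 (hH j0).2).2 hj0⟩
      rw [hE, hE] at heq
      rw [heq] at hlt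
      exact lt_irrefl _ hlt
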